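/- arXiv:2006.14504 — 4 statements merged into one kernel-verified Lean document; each statement's English description precedes it below -/
import Mathlib

section
/- Let Σ = {x₁,…,x_d} and σ : Σ* → {x,y}* the substitution x_i ↦ x·yⁱ, w ∈ Σ^ℕ, w' = σ(w). Then c_{w'}(n) ≤ (d+1)²·∑_{p=0}^{2d+2} c_w(n+p) for all n, and consequently c_w ∼ c_{w'}. -/
/-! A factor of `σ(w)` of length `n` starts at some offset `r ≤ d` inside the image of a letter
`w k`, and is then determined by `r` and the `n + d` letters of `w` from position `k` on, so
`c_{σ(w)}(n) ≤ (d + 1) c_w(n + d)`. Conversely, the factor `w_k ⋯ w_{k+n-1}` can be decoded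
letter by letter from the `(d + 1) n` letters of `σ(w)` that start at the image of `w_k`, so
`c_w(n) ≤ c_{σ(w)}((d + 1) n)`. Monotonicity of complexity turns the two bounds into
`c_w ∼ c_{σ(w)}`.
-/

/-- The length-`L` window of the infinite word `w` starting at position `i`. -/
def windowN {α : Type*} (w : ℕ → α) (i L : ℕ) : List α :=
  List.ofFn fun k : Fin L => w (i + k)

/-- `v` is a (finite) factor of the infinite word `w`. -/
def IsFactorN {α : Type*} (w : ℕ → α) (v : List α) : Prop :=
  ∃ i : ℕ, v = windowN w i v.length

/-- The complexity function of `w`: the number of distinct length-`n` factors of `w`. -/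
noncomputable def complexity {α : Type*} (w : ℕ → α) (n : ℕ) : ℕ :=
  Nat.card {v : List α // v.length = n ∧ IsFactorN w v}

/-- The starting position in `σ(w)` of the image of the `k`-th letter of `w`, where the
substitution `σ` sends the letter `xᵢ` (encoded as `i - 1 : Fin d`, for `1 ≤ i ≤ d`) to
`x yⁱ`, a word of length `i + 1`. -/
def subStart {d : ℕ} (w : ℕ → Fin d) (k : ℕ) : ℕ :=
  ∑ j ∈ Finset.range k, ((w j : ℕ) + 2)

/- The infinite word `σ(w)` over the two-letter alphabet `{x, y}`, encoded in `Bool` with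
`x = false` and `y = true`: position `n` carries the letter `x` exactly when `n` is the
starting position of the image `σ(xᵢ) = x yⁱ` of some letter of `w`. -/
open Classical in
noncomputable def subWord {d : ℕ} (w : ℕ → Fin d) : ℕ → Bool :=
  fun n => if ∃ k : ℕ, subStart w k = n then false else true

/-- `f ≼ g`: there exist positive constants `C, D` with `f n ≤ C * g (D * n)` for all `n`. -/
def GrowthPreceq (f g : ℕ → ℕ) : Prop :=
  ∃ C D : ℕ, 0 < C ∧ 0 < D ∧ ∀ n : ℕ, f n ≤ C * g (D * n)

variable {d : ℕ}

section subStart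

variable (w : ℕ → Fin d)

lemma subStart_succ (k : ℕ) : subStart w (k + 1) = subStart w k + ((w k : ℕ) + 2) :=
  Finset.sum_range_succ _ _

lemma subStart_add (k t : ℕ) :
    subStart w (k + t) = subStart w k + subStart (fun j => w (k + j)) t :=
  Finset.sum_range_add _ _ _

lemma subStart_strictMono : StrictMono (subStart w) :=
  strictMono_nat_of_lt_succ fun k => by rw [subStart_succ]; omega

lemma subStart_le_mul (k : ℕ) : subStart w k ≤ (d + 1) * k :=
  calc subStart w k ≤ (Finset.range k).card • (d + 1) :=
        Finset.sum_le_card_nsmul _ _ _ fun j _ => by have := (w j).isLt; omega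
    _ = (d + 1) * k := by simp [mul_comm]

lemma subStart_add_surjective :
    Function.Surjective fun p : ℕ × Fin (d + 1) => subStart w p.1 + p.2 := by
  suffices h : ∀ i, ∃ k, ∃ r < (w k : ℕ) + 2, subStart w k + r = i by
    intro i
    obtain ⟨k, r, hr, rfl⟩ := h i
    exact ⟨(k, ⟨r, by have := (w k).isLt; omega⟩), rfl⟩
  intro i
  induction i with
  | zero => exact ⟨0, 0, by omega, rfl⟩
  | succ i ih =>
    obtain ⟨k, r, hr, rfl⟩ := ih
    by_cases h : r + 1 < (w k : ℕ) + 2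
    · exact ⟨k, r + 1, h, rfl⟩
    · exact ⟨k + 1, 0, by omega, by rw [subStart_succ]; omega⟩

end subStart

lemma subStart_congr {w w' : ℕ → Fin d} {k : ℕ} (h : ∀ j < k, w j = w' j) :
    subStart w k = subStart w' k :=
  Finset.sum_congr rfl fun j hj => by rw [h j (Finset.mem_range.mp hj)]

section subWord

variable (w : ℕ → Fin d)

lemma subWord_eq_false_iff (m : ℕ) : subWord w m = false ↔ ∃ k, subStart w k = m := by
  unfold subWord
  split_ifs with h <;> simp [h]

lemma subWord_eq_subWord_of_iff {w' : ℕ → Fin d} {m m' : ℕ}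
    (h : (∃ k, subStart w k = m) ↔ ∃ k, subStart w' k = m') : subWord w m = subWord w' m' := by
  unfold subWord
  split_ifs <;> tauto

lemma subWord_subStart (k : ℕ) : subWord w (subStart w k) = false :=
  (subWord_eq_false_iff w _).mpr ⟨k, rfl⟩

lemma subWord_subStart_add_of_pos_of_lt {k m : ℕ} (h₀ : 0 < m) (hm : m < (w k : ℕ) + 2) :
    subWord w (subStart w k + m) = true := by
  rw [← Bool.not_eq_false, subWord_eq_false_iff]
  rintro ⟨k', hk'⟩
  have h₁ : subStart w k < subStart w k' := by omega
  have h₂ : subStart w k' < subStart w (k + 1) := by rw [subStart_succ]; omega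
  rw [(subStart_strictMono w).lt_iff_lt] at h₁ h₂
  omega

lemma subWord_subStart_add (k m : ℕ) :
    subWord w (subStart w k + m) = subWord (fun j => w (k + j)) m := by
  have key : (∃ k', subStart w k' = subStart w k + m) ↔
      ∃ t, subStart (fun j => w (k + j)) t = m := by
    constructor
    · rintro ⟨k', hk'⟩
      have hk : k ≤ k' := (subStart_strictMono w).le_iff_le.mp (by omega)
      obtain ⟨t, rfl⟩ := Nat.exists_eq_add_of_le hk
      exact ⟨t, by rw [subStart_add] at hk'; omega⟩
    · rintro ⟨t, rfl⟩
      exact ⟨k + t, subStart_add w k t⟩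
  exact subWord_eq_subWord_of_iff w key

end subWord

lemma subWord_congr {w w' : ℕ → Fin d} {m : ℕ} (h : ∀ j < m, w j = w' j) :
    subWord w m = subWord w' m := by
  have key : ∀ {u u' : ℕ → Fin d}, (∀ j < m, u j = u' j) →
      (∃ k, subStart u k = m) → ∃ k, subStart u' k = m := by
    rintro u u' h ⟨k, rfl⟩
    have hk : k ≤ subStart u k := (subStart_strictMono u).id_le k
    exact ⟨k, (subStart_congr fun j hj => h j (hj.trans_le hk)).symm⟩
  exact subWord_eq_subWord_of_iff w ⟨key h, key fun j hj => (h j hj).symm⟩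

/-- At position `subStart w (t + 1)` the image of `w` starts a new block with `x`, while the
image of `w'` is still inside the block `y ^ (w' t + 1)`. -/
lemma exists_subWord_ne_of_lt {w w' : ℕ → Fin d} {t : ℕ} (h : ∀ j < t, w j = w' j)
    (hlt : w t < w' t) : ∃ m < (d + 1) * (t + 1), subWord w m ≠ subWord w' m := by
  have hw' := (w' t).isLt
  have hle := subStart_le_mul w t
  refine ⟨subStart w (t + 1), ?_, ?_⟩
  · rw [subStart_succ, Nat.mul_succ]; omega
  · rw [subWord_subStart, subStart_succ, subStart_congr h,
      subWord_subStart_add_of_pos_of_lt w' (by omega) (by omega)]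
    decide

lemma eq_of_subWord_eq {w w' : ℕ → Fin d} {n : ℕ}
    (h : ∀ m < (d + 1) * n, subWord w m = subWord w' m) : ∀ t < n, w t = w' t := by
  intro t
  induction t using Nat.strong_induction_on with
  | _ t ih =>
    intro ht
    have hpre : ∀ j < t, w j = w' j := fun j hj => ih j hj (hj.trans ht)
    have hmono : (d + 1) * (t + 1) ≤ (d + 1) * n := Nat.mul_le_mul_left _ ht
    by_contra hne
    rcases lt_or_gt_of_ne hne with hlt | hgt
    · obtain ⟨m, hm, hne'⟩ := exists_subWord_ne_of_lt hpre hlt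
      exact hne' (h m (hm.trans_le hmono))
    · obtain ⟨m, hm, hne'⟩ := exists_subWord_ne_of_lt (fun j hj => (hpre j hj).symm) hgt
      exact hne' (h m (hm.trans_le hmono)).symm

section Counting

variable {α : Type*}

@[simp] lemma windowN_length (w : ℕ → α) (i L : ℕ) : (windowN w i L).length = L :=
  List.length_ofFn

lemma windowN_eq_windowN_iff {w w' : ℕ → α} {i i' L : ℕ} :
    windowN w i L = windowN w' i' L ↔ ∀ j < L, w (i + j) = w' (i' + j) := by
  simp [windowN, List.ofFn_inj, funext_iff, Fin.forall_iff]

lemma complexity_eq_card_range (w : ℕ → α) (n : ℕ) :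
    complexity w n = Nat.card (Set.range fun i => windowN w i n) := by
  refine Nat.card_congr (Equiv.subtypeEquivRight fun v => ?_)
  constructor
  · rintro ⟨rfl, i, hi⟩
    exact ⟨i, hi.symm⟩
  · rintro ⟨i, rfl⟩
    exact ⟨windowN_length .., i, by rw [windowN_length]⟩

instance finite_range_windowN [Finite α] (w : ℕ → α) (n : ℕ) :
    Finite (Set.range fun i => windowN w i n) :=
  ((List.finite_length_eq α n).subset
    (Set.range_subset_iff.mpr fun i => windowN_length w i n)).to_subtype

lemma card_range_le_of_factorsThrough {ι β γ : Type*} {f : ι → β} {g : ι → γ}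
    (hg : (Set.range g).Finite) (h : Function.FactorsThrough f g) :
    Nat.card (Set.range f) ≤ Nat.card (Set.range g) :=
  have := hg.to_subtype
  Nat.card_le_card_of_surjective (fun y : Set.range g => ⟨f y.2.choose, _, rfl⟩)
    fun ⟨_, a, ha⟩ => ⟨⟨g a, a, rfl⟩, Subtype.ext
      ((h (⟨g a, a, rfl⟩ : Set.range g).2.choose_spec).trans ha)⟩

lemma complexity_zero (w : ℕ → α) : complexity w 0 = 1 := by
  simp [complexity_eq_card_range, windowN]

lemma complexity_mono [Finite α] (w : ℕ → α) : Monotone (complexity w) := by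
  intro m m' hm
  simp only [complexity_eq_card_range]
  refine card_range_le_of_factorsThrough (Set.toFinite _) fun a b hab => ?_
  rw [windowN_eq_windowN_iff] at hab ⊢
  exact fun j hj => hab j (hj.trans_le hm)

end Counting

lemma complexity_subWord_le (w : ℕ → Fin d) (n : ℕ) :
    complexity (subWord w) n ≤ (d + 1) * complexity w (n + d) := by
  set g := Prod.map (fun k => windowN w k (n + d)) (id : Fin (d + 1) → Fin (d + 1))
  have hg : Set.range g = (Set.range fun k => windowN w k (n + d)) ×ˢ Set.univ := by
    rw [Set.range_prodMap, Set.range_id]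
  simp only [complexity_eq_card_range]
  rw [← (subStart_add_surjective w).range_comp]
  calc _ ≤ Nat.card (Set.range g) := by
        refine card_range_le_of_factorsThrough
          (hg ▸ (Set.toFinite _).prod (Set.toFinite _)) ?_
        rintro ⟨k, r⟩ ⟨k', r'⟩ hkr
        simp only [g, Prod.map, Prod.mk.injEq, id, windowN_eq_windowN_iff] at hkr
        obtain ⟨hw, rfl⟩ := hkr
        have hr := r.isLt
        simp only [Function.comp, windowN_eq_windowN_iff, add_assoc, subWord_subStart_add]
        exact fun j hj => subWord_congr fun i hi => hw i (by omega)
    _ = (d + 1) * Nat.card (Set.range fun k => windowN w k (n + d)) := by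
        rw [hg, Nat.card_coe_set_eq, Set.ncard_prod, Set.ncard_univ, ← Nat.card_coe_set_eq,
          Nat.card_fin, mul_comm]

lemma complexity_le_complexity_subWord (w : ℕ → Fin d) (n : ℕ) :
    complexity w n ≤ complexity (subWord w) ((d + 1) * n) := by
  simp only [complexity_eq_card_range]
  calc Nat.card (Set.range fun k => windowN w k n)
      ≤ Nat.card (Set.range fun k => windowN (subWord w) (subStart w k) ((d + 1) * n)) := by
        refine card_range_le_of_factorsThrough
          ((Set.toFinite _).subset (Set.range_comp_subset_range _ _)) fun a b hab => ?_
        simp only [windowN_eq_windowN_iff, subWord_subStart_add] at hab ⊢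
        exact eq_of_subWord_eq hab
    _ ≤ Nat.card (Set.range fun i => windowN (subWord w) i ((d + 1) * n)) :=
        Nat.card_mono (Set.toFinite _)
          (Set.range_comp_subset_range (subStart w) fun i => windowN (subWord w) i _)

theorem stmt_5 (d : ℕ) (w : ℕ → Fin d) :
    (∀ n : ℕ, complexity (subWord w) n ≤
      (d + 1) ^ 2 * ∑ p ∈ Finset.range (2 * d + 3), complexity w (n + p)) ∧
    GrowthPreceq (complexity w) (complexity (subWord w)) ∧
    GrowthPreceq (complexity (subWord w)) (complexity w) := by
  refine ⟨fun n => ?_, ⟨1, d + 1, one_pos, d.succ_pos, fun n => ?_⟩,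
    ⟨d + 1, d + 1, d.succ_pos, d.succ_pos, fun n => ?_⟩⟩
  · have hterm : complexity w (n + d) ≤ ∑ p ∈ Finset.range (2 * d + 3), complexity w (n + p) :=
      Finset.single_le_sum (f := fun p => complexity w (n + p)) (fun _ _ => Nat.zero_le _)
        (Finset.mem_range.mpr (by omega))
    calc complexity (subWord w) n ≤ (d + 1) * complexity w (n + d) := complexity_subWord_le w n
      _ ≤ (d + 1) ^ 2 * ∑ p ∈ Finset.range (2 * d + 3), complexity w (n + p) := by
        rw [sq, mul_assoc]
        exact Nat.mul_le_mul_left _ (hterm.trans (Nat.le_mul_of_pos_left _ d.succ_pos))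
  · rw [one_mul]
    exact complexity_le_complexity_subWord w n
  · rcases Nat.eq_zero_or_pos n with rfl | hn
    · simp [complexity_zero]
    · calc complexity (subWord w) n ≤ (d + 1) * complexity w (n + d) :=
            complexity_subWord_le w n
        _ ≤ (d + 1) * complexity w ((d + 1) * n) :=
            Nat.mul_le_mul_left _ (complexity_mono w (by nlinarith))
end

section
/- Let f : ℕ → ℝ₊ be nondecreasing, and t ≥ 1 an integer such that f(2^t·n) ≥ n·f(n) for all n. Define f'(n) = ∑_{i=0}^{t-1} n^{-i/t}·f(2^i·n). Then f'(2n) ≥ (1/2)·n^{1/t}·f'(n) for all n ≥ 1. -/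
/-! Multiplying `f'(n)` by `n^{1/t}` shifts the weights `n^{-i/t}` by one step, so that the
`i`-th term of `n^{1/t} f'(n)` carries the weight `n^{-(i-1)/t}` of the `(i-1)`-th term of
`f'(2n)`, up to the factor `2^{-(i-1)/t} ≥ 1/2`. The `0`-th term `n^{1/t} f(n)` has no partner
this way; it is matched with the last term `(2n)^{-(t-1)/t} f(2^t n)` of `f'(2n)` by the growth
condition `n f(n) ≤ f(2^t n)`. -/

open Finset

/-- The modified function `f'(n) = ∑_{i=0}^{t-1} n^{-i/t} · f(2^i n)`. -/
noncomputable def modFun (t : ℕ) (f : ℕ → ℝ) (n : ℕ) : ℝ :=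
  ∑ i ∈ Finset.range t, (n : ℝ) ^ (-(i : ℝ) / (t : ℝ)) * f (2 ^ i * n)

namespace Real

lemma half_le_two_rpow_neg_div {j t : ℕ} (hj : j ≤ t) : (1 / 2 : ℝ) ≤ 2 ^ (-(j : ℝ) / t) := by
  have hjt : (j : ℝ) / t ≤ 1 := div_le_one_of_le₀ (by exact_mod_cast hj) t.cast_nonneg
  calc (1 / 2 : ℝ) = 2 ^ (-1 : ℝ) := by norm_num [rpow_neg_one]
    _ ≤ 2 ^ (-(j : ℝ) / t) := by
      apply rpow_le_rpow_of_exponent_le one_le_two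
      rw [neg_div]
      linarith

lemma half_mul_rpow_one_div_mul_rpow_le {x : ℝ} (hx : 0 < x) {j t : ℕ} (hj : j ≤ t) :
    1 / 2 * x ^ ((1 : ℝ) / t) * x ^ (-((j + 1 : ℕ) : ℝ) / t) ≤ (2 * x) ^ (-(j : ℝ) / t) := by
  have hshift : x ^ ((1 : ℝ) / t) * x ^ (-((j + 1 : ℕ) : ℝ) / t) = x ^ (-(j : ℝ) / t) := by
    rw [← rpow_add hx]
    push_cast
    ring_nf
  rw [mul_assoc, hshift, mul_rpow zero_le_two hx.le]
  exact mul_le_mul_of_nonneg_right (half_le_two_rpow_neg_div hj) (rpow_nonneg hx.le _)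

lemma half_mul_rpow_one_div_le {x : ℝ} (hx : 0 < x) {s t : ℕ} (hst : s + 1 = t) :
    1 / 2 * x ^ ((1 : ℝ) / t) ≤ (2 * x) ^ (-(s : ℝ) / t) * x := by
  have ht : (t : ℝ) ≠ 0 := by rw [← hst]; positivity
  have hshift : x ^ (-(s : ℝ) / t) * x = x ^ ((1 : ℝ) / t) := by
    rw [← rpow_add_one hx.ne']
    congr 1
    rw [← hst] at ht ⊢
    field_simp
    push_cast
    ring
  rw [mul_rpow zero_le_two hx.le, mul_assoc, hshift]
  exact mul_le_mul_of_nonneg_right (half_le_two_rpow_neg_div (by omega)) (rpow_nonneg hx.le _)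

end Real

theorem stmt_6_general (t : ℕ) (f : ℕ → ℝ) (hpos : ∀ n, 0 < f n)
    (hgrow : ∀ n : ℕ, (n : ℝ) * f n ≤ f (2 ^ t * n)) :
    ∀ n : ℕ, 1 ≤ n →
      (1 / 2) * (n : ℝ) ^ ((1 : ℝ) / (t : ℝ)) * modFun t f n ≤ modFun t f (2 * n) := by
  intro n hn
  have hx : (0 : ℝ) < n := by exact_mod_cast hn
  cases t with
  | zero => simp [modFun]
  | succ s =>
    have hdouble : ∀ i, 2 ^ i * (2 * n) = 2 ^ (i + 1) * n := fun i => by ring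
    simp only [modFun, mul_sum, hdouble, Nat.cast_mul, Nat.cast_ofNat]
    rw [sum_range_succ' _ s, sum_range_succ]
    apply add_le_add
    · refine sum_le_sum fun j hj => ?_
      rw [← mul_assoc]
      exact mul_le_mul_of_nonneg_right
        (Real.half_mul_rpow_one_div_mul_rpow_le hx (mem_range.mp hj).le.step) (hpos _).le
    · rw [Nat.cast_zero, neg_zero, zero_div, Real.rpow_zero, pow_zero, one_mul, one_mul]
      calc 1 / 2 * (n : ℝ) ^ ((1 : ℝ) / ↑(s + 1)) * f n
          ≤ (2 * n : ℝ) ^ (-(s : ℝ) / ↑(s + 1)) * n * f n :=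
            mul_le_mul_of_nonneg_right (Real.half_mul_rpow_one_div_le hx rfl) (hpos n).le
        _ ≤ (2 * n : ℝ) ^ (-(s : ℝ) / ↑(s + 1)) * f (2 ^ (s + 1) * n) := by
            rw [mul_assoc]
            exact mul_le_mul_of_nonneg_left (hgrow n) (by positivity)

theorem stmt_6 (t : ℕ) (ht : 1 ≤ t) (f : ℕ → ℝ) (hpos : ∀ n, 0 < f n)
    (hmono : Monotone f) (hgrow : ∀ n : ℕ, (n : ℝ) * f n ≤ f (2 ^ t * n)) :
    ∀ n : ℕ, 1 ≤ n →
      (1 / 2) * (n : ℝ) ^ ((1 : ℝ) / (t : ℝ)) * modFun t f n ≤ modFun t f (2 * n) :=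
  stmt_6_general t f hpos hgrow
end

section
/- Let f : ℕ → ℝ₊ be nondecreasing with f(2^t·n) ≥ n·f(n) for all n, and let f'(n) = ∑_{i=0}^{t-1} n^{-i/t}·f(2^i·n). Then f ≤ f' and f' ≤ t·f ∘ (2^{t-1} · ·); in particular f' ∼ f. -/
theorem natCast_rpow_le_one_of_nonpos {y : ℝ} (hy : y ≤ 0) (n : ℕ) : (n : ℝ) ^ y ≤ 1 := by
  rcases Nat.eq_zero_or_pos n with rfl | hn
  · simpa using Real.zero_rpow_le_one y
  · exact Real.rpow_le_one_of_one_le_of_nonpos (by exact_mod_cast hn) hy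

section modFun

variable {t : ℕ} {f : ℕ → ℝ}

theorem modFun_term_nonneg (hf : ∀ n, 0 ≤ f n) (n i : ℕ) :
    0 ≤ (n : ℝ) ^ (-(i : ℝ) / (t : ℝ)) * f (2 ^ i * n) :=
  mul_nonneg (Real.rpow_nonneg n.cast_nonneg _) (hf _)

theorem le_modFun (ht : 1 ≤ t) (hf : ∀ n, 0 ≤ f n) (n : ℕ) : f n ≤ modFun t f n := by
  have h := Finset.single_le_sum (fun i _ => modFun_term_nonneg (t := t) hf n i)
    (Finset.mem_range.mpr ht)
  simpa [modFun] using h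

theorem modFun_le_mul (hmono : Monotone f) (hf : ∀ n, 0 ≤ f n) (n : ℕ) :
    modFun t f n ≤ t * f (2 ^ (t - 1) * n) := by
  have hterm : ∀ i ∈ Finset.range t,
      (n : ℝ) ^ (-(i : ℝ) / (t : ℝ)) * f (2 ^ i * n) ≤ f (2 ^ (t - 1) * n) := by
    intro i hi
    have hexp : -(i : ℝ) / t ≤ 0 := div_nonpos_of_nonpos_of_nonneg (by simp) t.cast_nonneg
    have hi' : i ≤ t - 1 := Nat.le_sub_one_of_lt (Finset.mem_range.mp hi)
    calc (n : ℝ) ^ (-(i : ℝ) / (t : ℝ)) * f (2 ^ i * n)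
        ≤ f (2 ^ i * n) := mul_le_of_le_one_left (hf _) (natCast_rpow_le_one_of_nonpos hexp n)
      _ ≤ f (2 ^ (t - 1) * n) := hmono (Nat.mul_le_mul_right _ (Nat.pow_le_pow_right two_pos hi'))
  simpa [modFun] using Finset.sum_le_card_nsmul _ _ _ hterm

end modFun

theorem stmt_7_general (t : ℕ) (ht : 1 ≤ t) (f : ℕ → ℝ) (hpos : ∀ n, 0 < f n)
    (hmono : Monotone f) :
    (∀ n : ℕ, f n ≤ modFun t f n) ∧
    (∀ n : ℕ, modFun t f n ≤ (t : ℝ) * f (2 ^ (t - 1) * n)) ∧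
    (∃ C D : ℕ, 0 < C ∧ 0 < D ∧ (∀ n : ℕ, f n ≤ (C : ℝ) * modFun t f (D * n)) ∧
      (∀ n : ℕ, modFun t f n ≤ (C : ℝ) * f (D * n))) := by
  have hf : ∀ n, 0 ≤ f n := fun n => (hpos n).le
  have hlow := le_modFun ht hf
  have hup : ∀ n, modFun t f n ≤ t * f (2 ^ (t - 1) * n) := modFun_le_mul hmono hf
  refine ⟨hlow, hup, t, 2 ^ (t - 1), ht, by positivity, fun n => ?_, hup⟩
  calc f n ≤ f (2 ^ (t - 1) * n) := hmono (Nat.le_mul_of_pos_left n (by positivity))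
    _ ≤ modFun t f (2 ^ (t - 1) * n) := hlow _
    _ ≤ t * modFun t f (2 ^ (t - 1) * n) :=
      le_mul_of_one_le_left ((hf _).trans (hlow _)) (by exact_mod_cast ht)

theorem stmt_7 (t : ℕ) (ht : 1 ≤ t) (f : ℕ → ℝ) (hpos : ∀ n, 0 < f n)
    (hmono : Monotone f) (hgrow : ∀ n : ℕ, (n : ℝ) * f n ≤ f (2 ^ t * n)) :
    (∀ n : ℕ, f n ≤ modFun t f n) ∧
    (∀ n : ℕ, modFun t f n ≤ (t : ℝ) * f (2 ^ (t - 1) * n)) ∧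
    (∃ C D : ℕ, 0 < C ∧ 0 < D ∧ (∀ n : ℕ, f n ≤ (C : ℝ) * modFun t f (D * n)) ∧
      (∀ n : ℕ, modFun t f n ≤ (C : ℝ) * f (D * n))) :=
  stmt_7_general t ht f hpos hmono
end

section
/- For q ≥ 4 and σ ∈ (0,1), the function φ(n) = ⌈exp(n/(ln^{(q-3)} n)^{1/σ})⌉ satisfies φ(2n) ≥ n·φ(n) for all sufficiently large n. -/
/-!
Write `f(x) = x / (ln^{(k)} x)^p` with `k = q - 3 ≥ 1` and `p = 1/σ`. Doubling the argument
raises `ln^{(k)}` by at most `ln 2`, so eventually `(ln^{(k)} (2x))^p ≤ (3/2) (ln^{(k)} x)^p` and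
`f(2x) ≥ (4/3) f(x)`. Since `ln^{(k)} x ≤ ln x`, `f(x)` outgrows `3 ln (2x)`, whence
`f(2x) ≥ f(x) + ln (2x)`; exponentiating gives `2n e^{f(n)} ≤ e^{f(2n)}`, which absorbs the
rounding of the ceiling.
-/

/-- The `k`-fold iterated natural logarithm. -/
noncomputable def iterLog : ℕ → ℝ → ℝ
  | 0, x => x
  | k + 1, x => Real.log (iterLog k x)

open Filter Real Asymptotics Topology

lemma tendsto_iterLog_atTop (k : ℕ) : Tendsto (iterLog k) atTop atTop := by
  induction k with
  | zero => exact tendsto_id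
  | succ k ih => exact tendsto_log_atTop.comp ih

lemma tendsto_iterLog_const_mul_atTop (k : ℕ) {c : ℝ} (hc : 0 < c) :
    Tendsto (fun x => iterLog k (c * x)) atTop atTop :=
  (tendsto_iterLog_atTop k).comp (tendsto_id.const_mul_atTop hc)

lemma iterLog_succ_le_iterLog (k : ℕ) : ∀ᶠ x in atTop, iterLog (k + 1) x ≤ iterLog k x :=
  ((tendsto_iterLog_atTop k).eventually_ge_atTop 0).mono fun _ hx => log_le_self hx

lemma iterLog_succ_le_log (k : ℕ) : ∀ᶠ x in atTop, iterLog (k + 1) x ≤ log x := by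
  induction k with
  | zero => exact Eventually.of_forall fun _ => le_rfl
  | succ k ih =>
    filter_upwards [ih, iterLog_succ_le_iterLog (k + 1)] with x h₁ h₂ using h₂.trans h₁

lemma iterLog_succ_mul_le (k : ℕ) {c : ℝ} (hc : 1 ≤ c) :
    ∀ᶠ x in atTop, iterLog (k + 1) (c * x) ≤ iterLog (k + 1) x + log c := by
  induction k with
  | zero =>
    filter_upwards [eventually_gt_atTop 0] with x hx
    simp only [iterLog]
    rw [log_mul (by linarith) hx.ne', add_comm]
  | succ k ih =>
    filter_upwards [ih, (tendsto_iterLog_atTop (k + 1)).eventually_ge_atTop 1,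
      (tendsto_iterLog_const_mul_atTop (k + 1) (by linarith)).eventually_gt_atTop 0]
      with x hle hone hpos
    have hlogc : log c ≤ c - 1 := log_le_sub_one_of_pos (by linarith)
    show log (iterLog (k + 1) (c * x)) ≤ log (iterLog (k + 1) x) + log c
    calc log (iterLog (k + 1) (c * x)) ≤ log (c * iterLog (k + 1) x) :=
          log_le_log hpos (by nlinarith)
      _ = log (iterLog (k + 1) x) + log c := by
          rw [log_mul (by linarith) (by linarith), add_comm]

lemma eventually_add_rpow_le_mul_rpow (c : ℝ) {p r : ℝ} (hr : 1 < r) :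
    ∀ᶠ L in atTop, (L + c) ^ p ≤ r * L ^ p := by
  have hbase : Tendsto (fun L : ℝ => 1 + c * L⁻¹) atTop (𝓝 1) := by
    simpa using (tendsto_inv_atTop_zero.const_mul c).const_add 1
  have hlim : Tendsto (fun L : ℝ => (1 + c * L⁻¹) ^ p) atTop (𝓝 1) := by
    simpa using hbase.rpow_const (p := p) (Or.inl one_ne_zero)
  filter_upwards [hlim.eventually (ge_mem_nhds hr), hbase.eventually (le_mem_nhds zero_lt_one),
    eventually_gt_atTop 0] with L hle hnonneg hL
  calc (L + c) ^ p = ((1 + c * L⁻¹) * L) ^ p := by congr 1; field_simp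
    _ = (1 + c * L⁻¹) ^ p * L ^ p := mul_rpow hnonneg hL.le
    _ ≤ r * L ^ p := by gcongr

lemma eventually_rpow_iterLog_two_mul_le (k : ℕ) {p r : ℝ} (hp : 0 ≤ p) (hr : 1 < r) :
    ∀ᶠ x in atTop, iterLog (k + 1) (2 * x) ^ p ≤ r * iterLog (k + 1) x ^ p := by
  filter_upwards [iterLog_succ_mul_le k one_le_two,
    (tendsto_iterLog_const_mul_atTop (k + 1) two_pos).eventually_ge_atTop 0,
    (tendsto_iterLog_atTop (k + 1)).eventually (eventually_add_rpow_le_mul_rpow (log 2) hr)]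
    with x hle hnonneg hratio
  exact (rpow_le_rpow hnonneg hle hp).trans hratio

lemma isLittleO_log_div_rpow_log (p : ℝ) : log =o[atTop] fun x => x / log x ^ p := by
  refine ((isLittleO_log_rpow_rpow_atTop (p + 1) one_pos).mul_isBigO
    (isBigO_refl (fun x => (log x ^ p)⁻¹) atTop)).congr' ?_ ?_
  · filter_upwards [tendsto_log_atTop.eventually_gt_atTop 0] with x hx
    rw [rpow_add hx, rpow_one]
    field_simp
  · filter_upwards with x
    rw [rpow_one, div_eq_mul_inv]

lemma isLittleO_log_two_mul_div_rpow_iterLog (k : ℕ) {p : ℝ} (hp : 0 ≤ p) :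
    (fun x => log (2 * x)) =o[atTop] fun x => x / iterLog (k + 1) x ^ p := by
  have hlog : (fun x => log (2 * x)) =O[atTop] log := by
    refine IsBigO.of_bound 2 ?_
    filter_upwards [tendsto_log_atTop.eventually_ge_atTop (log 2), eventually_gt_atTop 0]
      with x hx hx₀
    have : 0 ≤ log 2 := log_nonneg one_le_two
    rw [norm_eq_abs, norm_eq_abs, log_mul two_ne_zero hx₀.ne', abs_of_nonneg (by linarith),
      abs_of_nonneg (by linarith)]
    linarith
  have hiter : (fun x => x / log x ^ p) =O[atTop] fun x => x / iterLog (k + 1) x ^ p := by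
    refine IsBigO.of_bound 1 ?_
    filter_upwards [iterLog_succ_le_log k, (tendsto_iterLog_atTop (k + 1)).eventually_gt_atTop 0,
      eventually_gt_atTop 0] with x hle hpos hx
    rw [one_mul, norm_of_nonneg (div_nonneg hx.le (rpow_nonneg (hpos.le.trans hle) _)),
      norm_of_nonneg (by positivity)]
    exact div_le_div_of_nonneg_left hx.le (by positivity) (rpow_le_rpow hpos.le hle hp)
  exact hlog.trans_isLittleO ((isLittleO_log_div_rpow_log p).trans_isBigO hiter)

lemma eventually_log_two_mul_add_le (k : ℕ) {p : ℝ} (hp : 0 ≤ p) :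
    ∀ᶠ x in atTop,
      log (2 * x) + x / iterLog (k + 1) x ^ p ≤ 2 * x / iterLog (k + 1) (2 * x) ^ p := by
  filter_upwards
    [(isLittleO_log_two_mul_div_rpow_iterLog k hp).def (by norm_num : (0 : ℝ) < 1 / 3),
    eventually_rpow_iterLog_two_mul_le k hp (by norm_num : (1 : ℝ) < 3 / 2),
    (tendsto_iterLog_atTop (k + 1)).eventually_gt_atTop 0,
    (tendsto_iterLog_const_mul_atTop (k + 1) two_pos).eventually_gt_atTop 0,
    eventually_gt_atTop 0] with x hlog hratio hL hL₂ hx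
  set a := x / iterLog (k + 1) x ^ p
  have ha : 0 ≤ a := by positivity
  rw [norm_eq_abs, norm_of_nonneg ha] at hlog
  calc log (2 * x) + a ≤ 4 / 3 * a := by linarith [le_abs_self (log (2 * x))]
    _ = 2 * x / (3 / 2 * iterLog (k + 1) x ^ p) := by
        simp only [a]; field_simp; ring
    _ ≤ 2 * x / iterLog (k + 1) (2 * x) ^ p :=
        div_le_div_of_nonneg_left (by positivity) (by positivity) hratio

lemma natCast_mul_ceil_exp_le (n : ℕ) {a b : ℝ} (ha : 0 ≤ a) (h : log (2 * n) + a ≤ b) :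
    n * ⌈exp a⌉₊ ≤ ⌈exp b⌉₊ := by
  rcases n.eq_zero_or_pos with rfl | hn
  · simp
  have hn' : (0 : ℝ) < n := by exact_mod_cast hn
  rw [← Nat.cast_le (α := ℝ)]
  push_cast
  calc (n : ℝ) * ⌈exp a⌉₊ ≤ n * (exp a + 1) := by
        gcongr; exact (Nat.ceil_lt_add_one (exp_nonneg a)).le
    _ ≤ n * (2 * exp a) := by gcongr; linarith [one_le_exp ha]
    _ = exp (log (2 * n) + a) := by rw [exp_add, exp_log (by positivity)]; ring
    _ ≤ exp b := exp_le_exp.2 h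
    _ ≤ ⌈exp b⌉₊ := Nat.le_ceil _

theorem stmt_11_general (q : ℕ) (hq : 4 ≤ q) (σ : ℝ) (hσ0 : 0 < σ) :
    ∃ N : ℕ, ∀ n ≥ N,
      n * ⌈Real.exp ((n : ℝ) / (iterLog (q - 3) (n : ℝ)) ^ (1 / σ))⌉₊ ≤
        ⌈Real.exp ((2 * n : ℕ) / (iterLog (q - 3) ((2 * n : ℕ) : ℝ)) ^ (1 / σ))⌉₊ := by
  obtain ⟨k, hk⟩ : ∃ k, q - 3 = k + 1 := ⟨q - 4, by omega⟩
  have hp : 0 ≤ 1 / σ := by positivity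
  obtain ⟨N, hN⟩ := eventually_atTop.1 <| tendsto_natCast_atTop_atTop.eventually <|
    (eventually_log_two_mul_add_le k hp).and
      ((tendsto_iterLog_atTop (k + 1)).eventually_ge_atTop 0)
  refine ⟨N, fun n hn => ?_⟩
  obtain ⟨hkey, hL⟩ := hN n hn
  rw [hk]
  push_cast
  exact natCast_mul_ceil_exp_le n (by positivity) hkey

theorem stmt_11 (q : ℕ) (hq : 4 ≤ q) (σ : ℝ) (hσ0 : 0 < σ) (hσ1 : σ < 1) :
    ∃ N : ℕ, ∀ n ≥ N,
      n * ⌈Real.exp ((n : ℝ) / (iterLog (q - 3) (n : ℝ)) ^ (1 / σ))⌉₊ ≤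
        ⌈Real.exp ((2 * n : ℕ) / (iterLog (q - 3) ((2 * n : ℕ) : ℝ)) ^ (1 / σ))⌉₊ :=
  stmt_11_general q hq σ hσ0
end
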